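/- Let x ∈ X and w = P(1). In kX_∞ of weight λ, Δ(w⋄x⋄w) = Δ(P(1)xP(1)) = (P(1)xP(1))⊗1 + 2P²(1)⊗x + λP(1)⊗x + (xP(1))⊗P(1) + P(1)⊗(P(1)x) + (P(1)x)⊗P(1) + P(1)⊗(xP(1)) + 2x⊗P²(1) + λx⊗P(1) + 1⊗(P(1)xP(1)). In particular, if λ ≠ 0 in k, the terms λP(1)⊗x and λx⊗P(1) have total degree 2 ≠ 3 = deg(P(1)xP(1)), so Δ does not respect the total degree grading. -/

import Mathlib

open TensorProduct

universe u v

/-- Letters of Rota-Baxter bracketed words: either a variable from `X` or a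
bracketed word `⌊w⌋` (a list of letters). -/
inductive RBL (X : Type u) : Type u
  | var : X → RBL X
  | br : List (RBL X) → RBL X

namespace RBL

variable {X : Type u}

/-- `a.isBr = true` iff the letter `a` is a bracketed element `⌊w⌋ ∈ ⌊X_∞⌋`. -/
def isBr : RBL X → Bool
  | var _ => false
  | br _ => true

mutual
  /-- Validity of a letter: the inside of a bracket must be a Rota-Baxter bracketed word. -/
  def valid : RBL X → Prop
    | var _ => True
    | br l => wordValid l
  /-- `wordValid l` says that the list of letters `l` is a Rota-Baxter bracketed word,
  i.e. all letters are valid and the letters alternate (no two consecutive brackets). -/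
  def wordValid : List (RBL X) → Prop
    | [] => True
    | [a] => valid a
    | a :: b :: l => valid a ∧ ¬(a.isBr = true ∧ b.isBr = true) ∧ wordValid (b :: l)
end

lemma wordValid_nil : wordValid ([] : List (RBL X)) := by simp [wordValid]

lemma wordValid_var (x : X) : wordValid [var x] := by simp [wordValid, valid]

lemma wordValid_br {l : List (RBL X)} (h : wordValid l) : wordValid [br l] := by
  simpa [wordValid, valid] using h

mutual
  /-- The total degree of a letter. -/
  def degL : RBL X → ℕ
    | var _ => 1
    | br l => degW l + 1
  /-- The total degree of a word: the number of occurrences of brackets (i.e. of `P`)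
  plus the number of occurrences of letters of `X`. -/
  def degW : List (RBL X) → ℕ
    | [] => 0
    | a :: l => degL a + degW l
end

end RBL

/-- The set `X_∞` of Rota-Baxter bracketed words on `X`. -/
def RBWord (X : Type u) : Type u := {l : List (RBL X) // RBL.wordValid l}

namespace RBWord

variable {X : Type u}

/-- The empty word `1`. -/
def one : RBWord X := ⟨[], RBL.wordValid_nil⟩

/-- The total degree of a Rota-Baxter bracketed word. -/
def deg (w : RBWord X) : ℕ := RBL.degW w.1

end RBWord

variable (k : Type v) [CommRing k] (X : Type u)

/-- The free `k`-module `kX_∞` on the Rota-Baxter bracketed words. -/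
abbrev RBMod : Type max u v := RBWord X →₀ k

variable {X}

/-- A Rota-Baxter bracketed word viewed as a basis element of `kX_∞`. -/
noncomputable def sing (w : RBWord X) : RBMod k X := Finsupp.single w 1

variable (X)

/-- The Rota-Baxter operator `P` on `kX_∞`, sending a basis word `w` to `⌊w⌋`. -/
noncomputable def Pop : RBMod k X →ₗ[k] RBMod k X :=
  Finsupp.lmapDomain k k fun w => (⟨[RBL.br w.1], RBL.wordValid_br w.2⟩ : RBWord X)

/-- Concatenation on the left by `u₀` and on the right by `v₀`, as a linear map on `kX_∞`
(sending basis words whose concatenation is not valid to `0`; in all uses below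
the concatenations are valid). -/
noncomputable def concatLR (u₀ v₀ : List (RBL X)) : RBMod k X →ₗ[k] RBMod k X :=
  Finsupp.lsum k fun w =>
    letI := Classical.dec (RBL.wordValid (u₀ ++ w.1 ++ v₀))
    if h : RBL.wordValid (u₀ ++ w.1 ++ v₀) then
      Finsupp.lsingle (⟨u₀ ++ w.1 ++ v₀, h⟩ : RBWord X) else 0

/-- The counit `ε : kX_∞ → k`, `ε(1) = 1` and `ε(w) = 0` for basis words `w ≠ 1`. -/
noncomputable def eps : RBMod k X →ₗ[k] k := Finsupp.lapply RBWord.one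

/-- The homogeneous component `H^(n)` of `kX_∞`: the span of the basis words of total
degree `n`. -/
noncomputable def Hdeg (n : ℕ) : Submodule k (RBMod k X) :=
  Finsupp.supported k k {w : RBWord X | w.deg = n}

variable (lam : k)

/-- The data of the product `⋄` on the free Rota-Baxter algebra `kX_∞` of weight `lam`,
together with its recursive defining equations:
* if the concatenation of `u` and `v` is again a Rota-Baxter bracketed word (in particular
  if `u` or `v` is empty, or if the last letter of `u` or the first letter of `v` is a
  variable), then `u ⋄ v` is the concatenation `uv`;
* if `u = u₀⌊ā⌋` and `v = ⌊b̄⌋v₀`, then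
  `u ⋄ v = u₀(⌊⌊ā⌋ ⋄ b̄⌋ + ⌊ā ⋄ ⌊b̄⌋⌋ + λ⌊ā ⋄ b̄⌋)v₀`. -/
structure FreeRBAData where
  /-- the product `⋄`, as a `k`-bilinear map -/
  d : RBMod k X →ₗ[k] RBMod k X →ₗ[k] RBMod k X
  d_concat : ∀ (u v : RBWord X) (h : RBL.wordValid (u.1 ++ v.1)),
    d (sing k u) (sing k v) = sing k ⟨u.1 ++ v.1, h⟩
  d_br : ∀ (u₀ v₀ : List (RBL X)) (a b : RBWord X)
    (hu : RBL.wordValid (u₀ ++ [RBL.br a.1])) (hv : RBL.wordValid (RBL.br b.1 :: v₀)),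
    d (sing k ⟨u₀ ++ [RBL.br a.1], hu⟩) (sing k ⟨RBL.br b.1 :: v₀, hv⟩)
      = concatLR k X u₀ v₀
          (Pop k X (d (Pop k X (sing k a)) (sing k b))
            + Pop k X (d (sing k a) (Pop k X (sing k b)))
            + lam • Pop k X (d (sing k a) (sing k b)))

namespace FreeRBAData

variable {k X lam}

/-- The componentwise product `⋄ ⊗ ⋄` on `kX_∞ ⊗ kX_∞`. -/
noncomputable def mulT (D : FreeRBAData k X lam) :
    (RBMod k X ⊗[k] RBMod k X) →ₗ[k] (RBMod k X ⊗[k] RBMod k X) →ₗ[k]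
      (RBMod k X ⊗[k] RBMod k X) :=
  TensorProduct.map₂ D.d D.d

end FreeRBAData

/-- The free Rota-Baxter algebra `kX_∞` of weight `lam` together with the coproduct `Δ`,
characterized by its recursive defining equations:
`Δ(1) = 1 ⊗ 1`, `Δ(x) = x ⊗ 1 + 1 ⊗ x` for `x ∈ X`,
`Δ(⌊w⌋) = ⌊w⌋ ⊗ 1 + (id ⊗ P)Δ(w)`, and
`Δ(w₁ ⋄ ⋯ ⋄ w_m) = Δ(w₁) ⋄ ⋯ ⋄ Δ(w_m)` for the `⋄`-factorization of a word into its
(alternating) sequence of letters. -/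
structure FreeRBBialgData extends FreeRBAData k X lam where
  /-- the coproduct `Δ` -/
  Dl : RBMod k X →ₗ[k] (RBMod k X ⊗[k] RBMod k X)
  Dl_one : Dl (sing k RBWord.one) = sing k RBWord.one ⊗ₜ[k] sing k RBWord.one
  Dl_var : ∀ (x : X),
    Dl (sing k ⟨[RBL.var x], RBL.wordValid_var x⟩)
      = sing k ⟨[RBL.var x], RBL.wordValid_var x⟩ ⊗ₜ[k] sing k RBWord.one
        + sing k RBWord.one ⊗ₜ[k] sing k ⟨[RBL.var x], RBL.wordValid_var x⟩
  Dl_br : ∀ w : RBWord X,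
    Dl (Pop k X (sing k w))
      = Pop k X (sing k w) ⊗ₜ[k] sing k RBWord.one
        + TensorProduct.map LinearMap.id (Pop k X) (Dl (sing k w))
  Dl_cons : ∀ (a : RBL X) (l : List (RBL X)) (h : RBL.wordValid (a :: l))
    (ha : RBL.wordValid [a]) (hl : RBL.wordValid l), l ≠ [] →
    Dl (sing k ⟨a :: l, h⟩)
      = TensorProduct.map₂ d d (Dl (sing k ⟨[a], ha⟩)) (Dl (sing k ⟨l, hl⟩))

namespace RBL

variable {X : Type u}

lemma wordValid_map_var (s : List X) : wordValid (s.map RBL.var) := by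
  induction s with
  | nil => exact wordValid_nil
  | cons a t ih =>
    cases t with
    | nil => exact wordValid_var a
    | cons b t' =>
      simp only [List.map_cons] at ih ⊢
      exact ⟨by simp [valid], by simp [isBr], ih⟩

end RBL

variable {X}

/-- The word `x₁ ⋯ x_m ∈ M(X)` as a basis element of `kX_∞`. -/
noncomputable def varWord (s : List X) : RBMod k X :=
  sing k ⟨s.map RBL.var, RBL.wordValid_map_var s⟩

/-- A letter in `X ∪ ⌊X_∞⌋`, viewed as a basis element of `kX_∞` (invalid letters are
sent to `0`; they do not occur below). -/
noncomputable def letterMod (a : RBL X) : RBMod k X :=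
  letI := Classical.dec (RBL.wordValid [a])
  if h : RBL.wordValid [a] then sing k ⟨[a], h⟩ else 0

variable (X)

/-- The tensor product `H^(p) ⊗ H^(q)` of homogeneous components, as a submodule of
`kX_∞ ⊗ kX_∞`. -/
noncomputable def HdegT (p q : ℕ) : Submodule k (RBMod k X ⊗[k] RBMod k X) :=
  Submodule.map₂ (TensorProduct.mk k (RBMod k X) (RBMod k X)) (Hdeg k X p) (Hdeg k X q)

namespace FreeRBAData

variable {k X lam}

/-- The `⋄`-product `w₁ ⋄ (w₂ ⋄ (⋯ ⋄ (w_m ⋄ 1)))` of a sequence of letters. -/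
noncomputable def prodList (D : FreeRBAData k X lam) (l : List (RBL X)) : RBMod k X :=
  l.foldr (fun a acc => D.d (letterMod k a) acc) (sing k RBWord.one)

end FreeRBAData

/-!
`⌊1⌋x⌊1⌋` has the `⋄`-factorization `⌊1⌋ ⋄ (x ⋄ ⌊1⌋)`, so its coproduct is
`(⌊1⌋⊗1 + 1⊗⌊1⌋) ⋄ (x⊗1 + 1⊗x) ⋄ (⌊1⌋⊗1 + 1⊗⌊1⌋)`. Every product in the expansion is a
concatenation except `⌊1⌋ ⋄ ⌊1⌋ = 2⌊⌊1⌋⌋ + λ⌊1⌋`, whose weight term drops the degree by one.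
To see that this breaks the grading, take the coefficient of `⌊1⌋ ⊗ x`: it is a linear form
vanishing on every `H^(p) ⊗ H^(q)` with `p + q = 3`, but it takes the value `λ` on `Δ(⌊1⌋x⌊1⌋)`.
-/

namespace RBL

variable {X : Type u}

lemma wordValid_var_cons (x : X) {l : List (RBL X)} (h : wordValid l) :
    wordValid (var x :: l) := by
  cases l with
  | nil => exact wordValid_var x
  | cons b l => exact ⟨trivial, by simp [isBr], h⟩

lemma wordValid_br_var_cons {w : List (RBL X)} (hw : wordValid w) (x : X) {l : List (RBL X)}
    (h : wordValid (var x :: l)) : wordValid (br w :: var x :: l) :=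
  ⟨hw, by simp [isBr], h⟩

end RBL

namespace RBWord

variable {X : Type u}

lemma ne_of_val_ne {u v : RBWord X} (h : u.1 ≠ v.1) : u ≠ v :=
  fun e => h (congrArg Subtype.val e)

def var (x : X) : RBWord X := ⟨[RBL.var x], RBL.wordValid_var x⟩

def br (w : RBWord X) : RBWord X := ⟨[RBL.br w.1], RBL.wordValid_br w.2⟩

def brOneVar (x : X) : RBWord X :=
  ⟨[RBL.br [], RBL.var x],
    RBL.wordValid_br_var_cons RBL.wordValid_nil x (RBL.wordValid_var x)⟩

def varBrOne (x : X) : RBWord X :=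
  ⟨[RBL.var x, RBL.br []], RBL.wordValid_var_cons x (RBL.wordValid_br RBL.wordValid_nil)⟩

def brOneVarBrOne (x : X) : RBWord X :=
  ⟨[RBL.br [], RBL.var x, RBL.br []],
    RBL.wordValid_br_var_cons RBL.wordValid_nil x (varBrOne x).2⟩

@[simp] lemma val_one : (one : RBWord X).1 = [] := rfl

@[simp] lemma val_var (x : X) : (var x).1 = [RBL.var x] := rfl

@[simp] lemma val_br (w : RBWord X) : w.br.1 = [RBL.br w.1] := rfl

@[simp] lemma val_brOneVar (x : X) : (brOneVar x).1 = [RBL.br [], RBL.var x] := rfl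

@[simp] lemma val_varBrOne (x : X) : (varBrOne x).1 = [RBL.var x, RBL.br []] := rfl

@[simp] lemma val_brOneVarBrOne (x : X) :
    (brOneVarBrOne x).1 = [RBL.br [], RBL.var x, RBL.br []] := rfl

end RBWord

section Basis

variable {k : Type v} [CommRing k] {X : Type u}

lemma varWord_singleton (x : X) : varWord k [x] = sing k (RBWord.var x) := rfl

lemma Pop_sing (w : RBWord X) : Pop k X (sing k w) = sing k w.br :=
  Finsupp.mapDomain_single

lemma concatLR_nil_nil : concatLR k X [] [] = LinearMap.id := by
  refine Finsupp.lhom_ext' fun w => LinearMap.ext_ring ?_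
  have hw : RBL.wordValid ([] ++ w.1 ++ []) := by simpa using w.2
  simp only [concatLR, LinearMap.comp_apply, Finsupp.lsingle_apply, Finsupp.lsum_single,
    dif_pos hw, LinearMap.id_apply]
  exact congrArg (Finsupp.single · 1) (Subtype.ext (by simp))

lemma sing_apply_self (w : RBWord X) : sing k w w = 1 :=
  Finsupp.single_eq_same

lemma sing_apply_of_ne {w w' : RBWord X} (h : w ≠ w') : sing k w w' = 0 :=
  Finsupp.single_eq_of_ne' h

lemma sing_mem_Hdeg (w : RBWord X) : sing k w ∈ Hdeg k X w.deg :=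
  Finsupp.single_mem_supported k 1 rfl

lemma apply_eq_zero_of_mem_Hdeg {n : ℕ} {f : RBMod k X} (hf : f ∈ Hdeg k X n) {w : RBWord X}
    (hw : w.deg ≠ n) : f w = 0 :=
  Finsupp.notMem_support_iff.1 fun hmem => hw ((Finsupp.mem_supported k f).1 hf hmem)

variable (k) in
noncomputable def tensorCoeff (u v : RBWord X) : RBMod k X ⊗[k] RBMod k X →ₗ[k] k :=
  Finsupp.lapply (u, v) ∘ₗ (finsuppTensorFinsupp' k (RBWord X) (RBWord X)).toLinearMap

lemma tensorCoeff_tmul (u v : RBWord X) (a b : RBMod k X) :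
    tensorCoeff k u v (a ⊗ₜ b) = a u * b v :=
  finsuppTensorFinsupp'_apply_apply ..

lemma iSup_HdegT_le_ker_tensorCoeff {n : ℕ} {u v : RBWord X} (huv : u.deg + v.deg ≠ n) :
    ⨆ (p : ℕ) (q : ℕ) (_ : p + q = n), HdegT k X p q ≤ LinearMap.ker (tensorCoeff k u v) := by
  refine iSup_le fun p => iSup_le fun q => iSup_le fun hpq => ?_
  refine Submodule.map₂_le.2 fun a ha b hb => ?_
  rw [LinearMap.mem_ker, mk_apply, tensorCoeff_tmul]
  by_cases hp : u.deg = p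
  · rw [apply_eq_zero_of_mem_Hdeg hb (by omega), mul_zero]
  · rw [apply_eq_zero_of_mem_Hdeg ha hp, zero_mul]

end Basis

namespace FreeRBAData

variable {k : Type v} [CommRing k] {X : Type u} {lam : k} (A : FreeRBAData k X lam)

lemma d_one_left (f : RBMod k X) : A.d (sing k RBWord.one) f = f := by
  suffices h : A.d (sing k RBWord.one) = LinearMap.id from LinearMap.congr_fun h f
  exact Finsupp.lhom_ext' fun w => LinearMap.ext_ring (A.d_concat RBWord.one w w.2)

lemma d_one_right (f : RBMod k X) : A.d f (sing k RBWord.one) = f := by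
  suffices h : A.d.flip (sing k RBWord.one) = LinearMap.id from LinearMap.congr_fun h f
  refine Finsupp.lhom_ext' fun w => LinearMap.ext_ring ?_
  have hw : RBL.wordValid (w.1 ++ (RBWord.one (X := X)).1) := by simpa using w.2
  exact (A.d_concat w RBWord.one hw).trans
    (congrArg (Finsupp.single · 1) (Subtype.ext (by simp)))

lemma d_br_one_br_one :
    A.d (sing k (RBWord.one.br (X := X))) (sing k RBWord.one.br)
      = 2 • sing k RBWord.one.br.br + lam • sing k RBWord.one.br := by
  refine (A.d_br [] [] RBWord.one RBWord.one RBWord.one.br.2 RBWord.one.br.2).trans ?_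
  simp only [concatLR_nil_nil, LinearMap.id_apply, d_one_left, d_one_right, Pop_sing, two_smul]

variable (x : X)

lemma d_br_one_var :
    A.d (sing k RBWord.one.br) (sing k (RBWord.var x)) = sing k (RBWord.brOneVar x) :=
  A.d_concat _ _ _

lemma d_var_br_one :
    A.d (sing k (RBWord.var x)) (sing k RBWord.one.br) = sing k (RBWord.varBrOne x) :=
  A.d_concat _ _ _

lemma d_br_one_varBrOne :
    A.d (sing k RBWord.one.br) (sing k (RBWord.varBrOne x)) = sing k (RBWord.brOneVarBrOne x) :=
  A.d_concat _ _ _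

lemma d_brOneVar_br_one :
    A.d (sing k (RBWord.brOneVar x)) (sing k RBWord.one.br) = sing k (RBWord.brOneVarBrOne x) :=
  A.d_concat _ _ _

lemma mulT_tmul (a b c d : RBMod k X) : A.mulT (a ⊗ₜ b) (c ⊗ₜ d) = A.d a c ⊗ₜ A.d b d := by
  rw [mulT, map₂_apply_tmul, map_tmul]

end FreeRBAData

namespace FreeRBBialgData

variable {k : Type v} [CommRing k] {X : Type u} {lam : k} (D : FreeRBBialgData k X lam)

lemma Dl_sing_br_one :
    D.Dl (sing k RBWord.one.br)
      = sing k RBWord.one.br ⊗ₜ sing k RBWord.one + sing k RBWord.one ⊗ₜ sing k RBWord.one.br := by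
  rw [← Pop_sing, D.Dl_br, D.Dl_one, map_tmul, LinearMap.id_apply]

lemma Dl_sing_var (x : X) :
    D.Dl (sing k (RBWord.var x))
      = sing k (RBWord.var x) ⊗ₜ sing k RBWord.one + sing k RBWord.one ⊗ₜ sing k (RBWord.var x) :=
  D.Dl_var x

lemma Dl_d_sing_of_length_eq_one (u w : RBWord X) (hu : u.1.length = 1) (hw : w.1 ≠ [])
    (h : RBL.wordValid (u.1 ++ w.1)) :
    D.Dl (D.d (sing k u) (sing k w)) = D.mulT (D.Dl (sing k u)) (D.Dl (sing k w)) := by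
  obtain ⟨l, hl⟩ := u
  obtain ⟨a, rfl⟩ := List.length_eq_one_iff.1 hu
  rw [D.d_concat ⟨[a], hl⟩ w h]
  exact D.Dl_cons a w.1 h hl w.2 hw

lemma Dl_sing_brOneVarBrOne (x : X) :
    letI b := sing k (RBWord.one.br (X := X))
    letI ξ := sing k (RBWord.var x)
    D.Dl (sing k (RBWord.brOneVarBrOne x))
      = sing k (RBWord.brOneVarBrOne x) ⊗ₜ sing k RBWord.one
        + 2 • (sing k RBWord.one.br.br ⊗ₜ ξ) + lam • (b ⊗ₜ ξ)
        + sing k (RBWord.varBrOne x) ⊗ₜ b + b ⊗ₜ sing k (RBWord.brOneVar x)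
        + sing k (RBWord.brOneVar x) ⊗ₜ b + b ⊗ₜ sing k (RBWord.varBrOne x)
        + 2 • (ξ ⊗ₜ sing k RBWord.one.br.br) + lam • (ξ ⊗ₜ b)
        + sing k RBWord.one ⊗ₜ sing k (RBWord.brOneVarBrOne x) := by
  have hΔxb := D.Dl_d_sing_of_length_eq_one (RBWord.var x) RBWord.one.br rfl (by simp)
    (RBWord.varBrOne x).2
  have hΔbxb := D.Dl_d_sing_of_length_eq_one RBWord.one.br (RBWord.varBrOne x) rfl (by simp)
    (RBWord.brOneVarBrOne x).2
  rw [D.d_var_br_one] at hΔxb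
  rw [D.d_br_one_varBrOne] at hΔbxb
  rw [hΔbxb, hΔxb, Dl_sing_br_one, Dl_sing_var]
  simp only [map_add, LinearMap.add_apply, FreeRBAData.mulT_tmul, FreeRBAData.d_one_left,
    FreeRBAData.d_one_right, FreeRBAData.d_br_one_br_one, FreeRBAData.d_br_one_var,
    FreeRBAData.d_var_br_one, FreeRBAData.d_br_one_varBrOne, add_tmul, tmul_add, smul_tmul',
    tmul_smul]
  module

lemma not_forall_Dl_mem_iSup_HdegT (hlam : lam ≠ 0) (x : X) :
    ¬ ∀ n : ℕ, ∀ f ∈ Hdeg k X n, D.Dl f ∈ ⨆ (p : ℕ) (q : ℕ) (_ : p + q = n), HdegT k X p q := by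
  intro hall
  have hcoeff := iSup_HdegT_le_ker_tensorCoeff (k := k) (u := RBWord.one.br) (v := RBWord.var x)
    (by simp [RBWord.deg, RBL.degW, RBL.degL]) (hall _ _ (sing_mem_Hdeg (RBWord.brOneVarBrOne x)))
  rw [LinearMap.mem_ker, Dl_sing_brOneVarBrOne] at hcoeff
  simp only [map_add, map_smul, map_nsmul, tensorCoeff_tmul] at hcoeff
  simp (disch := exact RBWord.ne_of_val_ne (by simp)) only [sing_apply_self, sing_apply_of_ne,
    mul_zero, mul_one, smul_zero, add_zero, zero_add, smul_eq_mul] at hcoeff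
  exact hlam hcoeff

end FreeRBBialgData

/-- For `x ∈ X` and `w = P(1)`, the coproduct of `w ⋄ x ⋄ w = P(1)xP(1)`
in `kX_∞` of weight `lam` is
`Δ(P(1)xP(1)) = (P(1)xP(1))⊗1 + 2P²(1)⊗x + lam·P(1)⊗x + (xP(1))⊗P(1) + P(1)⊗(P(1)x)
+ (P(1)x)⊗P(1) + P(1)⊗(xP(1)) + 2x⊗P²(1) + lam·x⊗P(1) + 1⊗(P(1)xP(1))`.
In particular, if `lam ≠ 0`, the terms `lam·P(1)⊗x` and `lam·x⊗P(1)` have total degree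
`2 ≠ 3 = deg(P(1)xP(1))`, so `Δ` does not respect the total degree grading. -/
theorem coproduct_P1xP1
    {k : Type v} [CommRing k] {X : Type u} {lam : k} (D : FreeRBBialgData k X lam)
    (x : X) :
    (D.Dl (D.d (D.d (Pop k X (sing k RBWord.one)) (varWord k [x]))
        (Pop k X (sing k RBWord.one)))
      = (D.d (D.d (Pop k X (sing k RBWord.one)) (varWord k [x]))
            (Pop k X (sing k RBWord.one))) ⊗ₜ[k] sing k RBWord.one
        + 2 • (Pop k X (Pop k X (sing k RBWord.one)) ⊗ₜ[k] varWord k [x])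
        + lam • (Pop k X (sing k RBWord.one) ⊗ₜ[k] varWord k [x])
        + (D.d (varWord k [x]) (Pop k X (sing k RBWord.one)))
            ⊗ₜ[k] Pop k X (sing k RBWord.one)
        + Pop k X (sing k RBWord.one)
            ⊗ₜ[k] (D.d (Pop k X (sing k RBWord.one)) (varWord k [x]))
        + (D.d (Pop k X (sing k RBWord.one)) (varWord k [x]))
            ⊗ₜ[k] Pop k X (sing k RBWord.one)
        + Pop k X (sing k RBWord.one)
            ⊗ₜ[k] (D.d (varWord k [x]) (Pop k X (sing k RBWord.one)))
        + 2 • (varWord k [x] ⊗ₜ[k] Pop k X (Pop k X (sing k RBWord.one)))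
        + lam • (varWord k [x] ⊗ₜ[k] Pop k X (sing k RBWord.one))
        + sing k RBWord.one ⊗ₜ[k]
            (D.d (D.d (Pop k X (sing k RBWord.one)) (varWord k [x]))
              (Pop k X (sing k RBWord.one)))) ∧
    (lam ≠ 0 →
      RBL.degW [RBL.br [], RBL.var x] = 2 ∧
      RBL.degW [RBL.br [], RBL.var x, RBL.br []] = 3 ∧
      ¬(∀ n : ℕ, ∀ f ∈ Hdeg k X n,
          D.Dl f ∈ ⨆ (p : ℕ) (q : ℕ) (_ : p + q = n), HdegT k X p q)) := by
  refine ⟨?_, fun hlam => ⟨rfl, rfl, D.not_forall_Dl_mem_iSup_HdegT hlam x⟩⟩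
  simp only [varWord_singleton, Pop_sing, FreeRBAData.d_br_one_var, FreeRBAData.d_var_br_one,
    FreeRBAData.d_brOneVar_br_one]
  exact D.Dl_sing_brOneVarBrOne x
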